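/- arXiv:0806.4965 — 2 statements merged into one kernel-verified Lean document; each statement's English description precedes it below -/
import Mathlib

section
/- Let N′ be the endomorphism of ℂ⁴ with N′(u₃) = u₁ and N′(u_j) = 0 for j ≠ 3, and N the endomorphism with N(e₃) = e₁, N(e_j) = 0 for j ≠ 3, where u₁ = (e₁ + i e₃)/√2, u₃ = (e₁ − i e₃)/√2, u₂ = (e₂ + i e₄)/√2, u₄ = (e₂ − i e₄)/√2. Let F₀ be the flag with F₀³ = span(u₂) and F₀² = span(u₂, u₃). Then for all real x ≠ −2: exp(i x N)·F₀ = exp((x/(2+x))·N′)·F₀, i.e., the filtrations obtained by applying these two invertible linear maps to F₀ coincide. -/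
/-!
Both `N` and `N'` square to zero, so `exp (t N) = 1 + t N` and `exp (t N') = 1 + t N'`. Both
exponentials fix `u₂`, and since `N u₃ = -(i/2) (u₁ + u₃)`,
`exp (i x N) u₃ = u₃ + (x/2) (u₁ + u₃) = ((2 + x)/2) (u₃ + (x/(2 + x)) u₁)`,
which is a nonzero multiple of `exp ((x/(2 + x)) N') u₃`. (`u j` in the statement is `u_{j+1}`.)
-/

open Matrix NormedSpace

theorem exp_eq_one_add_of_mul_self_eq_zero {𝔸 : Type*} [Ring 𝔸] [Algebra ℚ 𝔸]
    [TopologicalSpace 𝔸] [IsTopologicalRing 𝔸] {a : 𝔸} (ha : a * a = 0) :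
    exp a = 1 + a := by
  have hpow : ∀ n, 2 ≤ n → a ^ n = 0 := fun n hn => by
    obtain ⟨m, rfl⟩ := Nat.exists_eq_add_of_le hn
    rw [pow_add, sq, ha, zero_mul]
  rw [congrFun exp_eq_tsum_rat a, tsum_eq_sum (s := Finset.range 2) fun n hn => by
    rw [hpow n (not_lt.1 (mt Finset.mem_range.2 hn)), smul_zero]]
  simp [Finset.sum_range_succ]

theorem Matrix.vecCons_four_eq_sum_single {R : Type*} [Semiring R] (a b c d : R) :
    ![a, b, c, d] =
      a • Pi.single 0 1 + b • Pi.single 1 1 + c • Pi.single 2 1 + d • Pi.single 3 1 := by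
  ext j
  fin_cases j <;> simp

theorem Submodule.span_range_eq_top_of_single_mem {ι n R : Type*} [Finite n] [DecidableEq n]
    [Semiring R] {v : ι → n → R} (h : ∀ j, Pi.single j 1 ∈ span R (Set.range v)) :
    span R (Set.range v) = ⊤ :=
  eq_top_iff.2 <| (Pi.basisFun R n).span_eq ▸ span_le.2 (by rintro _ ⟨j, rfl⟩; simpa using h j)

theorem Matrix.mul_self_eq_zero_of_span_eq_top {ι n R : Type*} [Fintype n] [CommSemiring R]
    {M : Matrix n n R} {v : ι → n → R} (hv : Submodule.span R (Set.range v) = ⊤)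
    {k l : ι} (hkl : k ≠ l) (hl : M *ᵥ v l = v k) (hj : ∀ j, j ≠ l → M *ᵥ v j = 0) :
    M * M = 0 := by
  have hsq : (M * M).mulVecLin = 0 := LinearMap.ext_on_range hv fun j => by
    rw [mulVecLin_apply, ← mulVec_mulVec, LinearMap.zero_apply]
    by_cases hjl : j = l
    · rw [hjl, hl, hj k hkl]
    · rw [hj j hjl, mulVec_zero]
  exact ext_iff_mulVec.2 fun w => by simpa using LinearMap.congr_fun hsq w

theorem Submodule.map_span_pair_eq_of_eq_smul {R M M' : Type*} [Semiring R]
    [AddCommMonoid M] [Module R M] [AddCommMonoid M'] [Module R M'] {f g : M →ₗ[R] M'}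
    {v w : M} {k : R} (hk : IsUnit k) (hv : f v = g v) (hw : f w = k • g w) :
    (span R {v, w}).map f = (span R {v, w}).map g := by
  rw [map_span, map_span, Set.image_pair, Set.image_pair, hv, hw, span_insert, span_insert,
    span_singleton_smul_eq hk]

section Rotation

variable {K M : Type*} [Field K] [NeZero (2 : K)] [AddCommGroup M] [Module K M] {i s : K}
  {a b p q : M}

theorem eq_inv_smul_add_of_eq (hs : s * s = 2) (hp : p = s⁻¹ • (a + i • b))
    (hq : q = s⁻¹ • (a - i • b)) : a = s⁻¹ • (p + q) := by
  have h2 : (2 : K)⁻¹ * 2 = 1 := inv_mul_cancel₀ two_ne_zero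
  rw [hp, hq, ← smul_add, smul_smul, ← mul_inv, hs]
  linear_combination (norm := module) -(h2 • a)

theorem eq_smul_sub_of_eq (hi : i * i = -1) (hs : s * s = 2) (hp : p = s⁻¹ • (a + i • b))
    (hq : q = s⁻¹ • (a - i • b)) : b = (-i * s⁻¹) • (p - q) := by
  have h2 : (2 : K)⁻¹ * 2 = 1 := inv_mul_cancel₀ two_ne_zero
  rw [hp, hq, ← smul_sub, smul_smul, mul_assoc, ← mul_inv, hs]
  linear_combination (norm := module) hi • b + (i * i * h2) • b

theorem LinearMap.apply_eq_smul_add_of_eq_inv_smul (hs : s * s = 2)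
    (hp : p = s⁻¹ • (a + i • b)) (hq : q = s⁻¹ • (a - i • b)) {f : M →ₗ[K] M}
    (ha : f a = 0) (hb : f b = a) : f q = (-i * 2⁻¹) • (p + q) := by
  have hs' : s⁻¹ * s⁻¹ = 2⁻¹ := by rw [← mul_inv, hs]
  calc f q = s⁻¹ • (0 - i • a) := by rw [hq, map_smul, map_sub, map_smul, ha, hb]
    _ = (-i * 2⁻¹) • (p + q) := by
      rw [eq_inv_smul_add_of_eq hs hp hq]
      linear_combination (norm := module) (-i * hs') • (p + q)

end Rotation

theorem add_I_mul_smul_eq_smul_add_div_smul {M : Type*} [AddCommGroup M] [Module ℂ M]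
    (p q : M) {x : ℂ} (hx : 2 + x ≠ 0) :
    q + (Complex.I * x) • (-Complex.I * 2⁻¹) • (p + q) =
      ((2 + x) / 2) • (q + (x / (2 + x)) • p) := by
  match_scalars <;> field_simp <;> linear_combination (-x) * Complex.I_sq

/-- On `ℂ⁴` (standard basis `e₁,…,e₄`), with
`u₁ = (e₁ + i e₃)/√2`, `u₂ = (e₂ + i e₄)/√2`, `u₃ = (e₁ - i e₃)/√2`, `u₄ = (e₂ - i e₄)/√2`,
let `N` be the matrix with `N e₃ = e₁`, `N e_j = 0 (j ≠ 3)` and `N'` the matrix with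
`N' u₃ = u₁`, `N' u_j = 0 (j ≠ 3)`.  Let `F₀` be the flag `F₀³ = span(u₂) ⊂ F₀² = span(u₂,u₃)`.
Then for every real `x ≠ -2`,
`exp(i x N) · F₀ = exp((x/(2+x)) N') · F₀` as flags (apply the map to each subspace). -/
theorem exp_ixN_F0_eq_exp_N'_F0
    (u : Fin 4 → (Fin 4 → ℂ))
    (hu0 : u 0 = (Real.sqrt 2 : ℂ)⁻¹ • ![1, 0, Complex.I, 0])
    (hu1 : u 1 = (Real.sqrt 2 : ℂ)⁻¹ • ![0, 1, 0, Complex.I])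
    (hu2 : u 2 = (Real.sqrt 2 : ℂ)⁻¹ • ![1, 0, -Complex.I, 0])
    (hu3 : u 3 = (Real.sqrt 2 : ℂ)⁻¹ • ![0, 1, 0, -Complex.I])
    (N : Matrix (Fin 4) (Fin 4) ℂ)
    (hN3 : N.mulVec (Pi.single 2 1) = Pi.single 0 1)
    (hNj : ∀ j : Fin 4, j ≠ 2 → N.mulVec (Pi.single j 1) = 0)
    (N' : Matrix (Fin 4) (Fin 4) ℂ)
    (hN'3 : N'.mulVec (u 2) = u 0)
    (hN'j : ∀ j : Fin 4, j ≠ 2 → N'.mulVec (u j) = 0)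
    (F3 F2 : Submodule ℂ (Fin 4 → ℂ))
    (hF3 : F3 = Submodule.span ℂ {u 1})
    (hF2 : F2 = Submodule.span ℂ {u 1, u 2}) :
    ∀ x : ℝ, x ≠ -2 →
      F3.map (exp ((Complex.I * x) • N)).mulVecLin =
        F3.map (exp (((x / (2 + x) : ℝ) : ℂ) • N')).mulVecLin ∧
      F2.map (exp ((Complex.I * x) • N)).mulVecLin =
        F2.map (exp (((x / (2 + x) : ℝ) : ℂ) • N')).mulVecLin := by
  intro x hx
  have hs : (Real.sqrt 2 : ℂ) * Real.sqrt 2 = 2 := by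
    rw [← Complex.ofReal_mul, Real.mul_self_sqrt zero_le_two, Complex.ofReal_ofNat]
  simp only [vecCons_four_eq_sum_single, zero_smul, one_smul, add_zero, zero_add, neg_smul,
    ← sub_eq_add_neg] at hu0 hu1 hu2 hu3
  have hspan : Submodule.span ℂ (Set.range u) = ⊤ := by
    have hu : ∀ j, u j ∈ Submodule.span ℂ (Set.range u) := fun j => Submodule.subset_span ⟨j, rfl⟩
    refine Submodule.span_range_eq_top_of_single_mem fun j => ?_
    fin_cases j <;> simp only [Fin.zero_eta, Fin.mk_one, Fin.reduceFinMk,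
      eq_inv_smul_add_of_eq hs hu0 hu2, eq_inv_smul_add_of_eq hs hu1 hu3,
      eq_smul_sub_of_eq Complex.I_mul_I hs hu0 hu2, eq_smul_sub_of_eq Complex.I_mul_I hs hu1 hu3] <;>
      apply_rules [Submodule.smul_mem, add_mem, sub_mem]
  have hNN : N * N = 0 := mul_self_eq_zero_of_span_eq_top (Pi.basisFun ℂ (Fin 4)).span_eq
    (by decide : (0 : Fin 4) ≠ 2) (by simpa using hN3) (by simpa using hNj)
  have hN'N' : N' * N' = 0 := mul_self_eq_zero_of_span_eq_top hspan (by decide) hN'3 hN'j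
  have hNu1 : N *ᵥ u 1 = 0 := by
    simp [hu1, mulVec_smul, mulVec_add, hNj 1 (by decide), hNj 3 (by decide)]
  have hNu2 : N *ᵥ u 2 = (-Complex.I * 2⁻¹) • (u 0 + u 2) :=
    N.mulVecLin.apply_eq_smul_add_of_eq_inv_smul hs hu0 hu2 (hNj 0 (by decide)) hN3
  have h2x : (2 + x : ℂ) ≠ 0 := by exact_mod_cast (show 2 + x ≠ 0 by contrapose! hx; linarith)
  rw [exp_eq_one_add_of_mul_self_eq_zero (by rw [smul_mul_smul_comm, hNN, smul_zero]),
    exp_eq_one_add_of_mul_self_eq_zero (by rw [smul_mul_smul_comm, hN'N', smul_zero]), hF3, hF2]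
  refine ⟨?_, Submodule.map_span_pair_eq_of_eq_smul (div_ne_zero h2x two_ne_zero).isUnit ?_ ?_⟩
  · simp [Submodule.map_span, hNu1, hN'j 1 (by decide)]
  · simp [hNu1, hN'j 1 (by decide)]
  · simp only [mulVecLin_apply, add_mulVec, one_mulVec, smul_mulVec, hNu2, hN'3]
    push_cast
    exact add_I_mul_smul_eq_smul_add_div_smul _ _ h2x
end

section
/- The K-orbit of F₀, where K = {diag(X, conj X) : X ∈ U(2)} acting on flags in ℂ⁴, equals {F_w : w ∈ ℂ} ∪ {F_∞}, and this orbit is a complex submanifold of the flag variety isomorphic to ℙ¹(ℂ). -/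
/-!
A line `[v₀ : v₁]` of `ℂ²` determines the flag
`(span(v₀u₁ + v₁u₂), span(v₀u₁ + v₁u₂, v₁u₃ − v₀u₄))`, which is `F_w` for `[w : 1]` and `F_∞`
for `[1 : 0]`; already its first member recovers the line, so this map `ℙ¹ → flags` is injective.
For `X ∈ U(2)` the identity `star X = (det X)⁻¹ adj X` says that the first column of `X̄` is
`(det X)⁻¹ (X₁₁, −X₀₁)`, so `diag(X, X̄)` carries `F₀` to the flag of the line spanned by the
second column of `X`. Every line of `ℂ²` is spanned by the second column of a unitary matrix,
hence the orbit is exactly the image of `ℙ¹`.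
-/

open Matrix Complex

noncomputable section

/-- The flag `F_w`: `F_w³ = span(w u₁ + u₂)`, `F_w² = span(w u₁ + u₂, u₃ - w u₄)`,
in the coordinates where the standard basis of `ℂ⁴` is `u₁,…,u₄`. -/
def Fw (w : ℂ) : Submodule ℂ (Fin 4 → ℂ) × Submodule ℂ (Fin 4 → ℂ) :=
  (Submodule.span ℂ {![w, 1, 0, 0]}, Submodule.span ℂ {![w, 1, 0, 0], ![0, 0, 1, -w]})

/-- The flag `F_∞`: `F_∞³ = span(u₁)`, `F_∞² = span(u₁, u₄)`. -/
def Finfty : Submodule ℂ (Fin 4 → ℂ) × Submodule ℂ (Fin 4 → ℂ) :=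
  (Submodule.span ℂ {![1, 0, 0, 0]}, Submodule.span ℂ {![1, 0, 0, 0], ![0, 0, 0, 1]})

/-- The base flag `F₀ = F_0`: `F₀³ = span(u₂)`, `F₀² = span(u₂, u₃)`. -/
def F0 : Submodule ℂ (Fin 4 → ℂ) × Submodule ℂ (Fin 4 → ℂ) :=
  (Submodule.span ℂ {![0, 1, 0, 0]}, Submodule.span ℂ {![0, 1, 0, 0], ![0, 0, 1, 0]})

/-- `K = {diag(X, conj X) : X ∈ U(2)}` in the basis `(u₁, u₂; u₃, u₄)`. -/
def K9 : Set (Matrix (Fin 4) (Fin 4) ℂ) :=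
  {g | ∃ X : Matrix (Fin 2) (Fin 2) ℂ, X ∈ Matrix.unitaryGroup (Fin 2) ℂ ∧
    g = Matrix.reindex finSumFinEquiv finSumFinEquiv
      (Matrix.fromBlocks X 0 0 (X.map (starRingEnd ℂ)))}

/-- `g` acts on a flag by applying the linear map to each subspace. -/
def mapFlag (g : Matrix (Fin 4) (Fin 4) ℂ)
    (F : Submodule ℂ (Fin 4 → ℂ) × Submodule ℂ (Fin 4 → ℂ)) :
    Submodule ℂ (Fin 4 → ℂ) × Submodule ℂ (Fin 4 → ℂ) :=
  (F.1.map g.mulVecLin, F.2.map g.mulVecLin)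

namespace Matrix

section

variable {n α : Type*} [Fintype n] [DecidableEq n] [CommRing α] [StarRing α]

theorem adjugate_eq_det_smul_star {X : Matrix n n α} (hX : X ∈ unitaryGroup n α) :
    adjugate X = X.det • star X := by
  calc adjugate X = star X * X * adjugate X := by rw [mem_unitaryGroup_iff'.mp hX, one_mul]
    _ = X.det • star X := by rw [Matrix.mul_assoc, mul_adjugate, Matrix.mul_smul, Matrix.mul_one]

theorem col_ne_zero_of_mem_unitaryGroup [Nontrivial α] {X : Matrix n n α}
    (hX : X ∈ unitaryGroup n α) (j : n) :
    (fun i => X i j) ≠ 0 := by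
  intro h
  have hjj := congr_fun₂ (mem_unitaryGroup_iff'.mp hX) j j
  simp_all [mul_apply, star_apply, funext_iff]

end

theorem exists_mem_unitaryGroup_col_eq_smul (v : Fin 2 → ℂ) (hv : v ≠ 0) :
    ∃ X ∈ unitaryGroup (Fin 2) ℂ, ∃ c : ℂ, (fun i => X i 1) = c • v := by
  set s : ℝ := Complex.normSq (v 0) + Complex.normSq (v 1)
  have hs : 0 < s := by
    by_contra! hs
    have h0 : Complex.normSq (v 0) = 0 := by
      linarith [Complex.normSq_nonneg (v 0), Complex.normSq_nonneg (v 1)]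
    have h1 : Complex.normSq (v 1) = 0 := by
      linarith [Complex.normSq_nonneg (v 0), Complex.normSq_nonneg (v 1)]
    exact hv (by ext i; fin_cases i; exacts [normSq_eq_zero.mp h0, normSq_eq_zero.mp h1])
  set r : ℝ := Real.sqrt s
  have hr : (r : ℂ) ≠ 0 := Complex.ofReal_ne_zero.mpr (Real.sqrt_ne_zero'.mpr hs)
  have hrr : (r : ℂ) * r = starRingEnd ℂ (v 0) * v 0 + starRingEnd ℂ (v 1) * v 1 := by
    rw [← Complex.ofReal_mul, Real.mul_self_sqrt hs.le, Complex.ofReal_add,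
      Complex.normSq_eq_conj_mul_self, Complex.normSq_eq_conj_mul_self]
  refine ⟨(r : ℂ)⁻¹ • !![starRingEnd ℂ (v 1), v 0; -starRingEnd ℂ (v 0), v 1], ?_,
    (r : ℂ)⁻¹, ?_⟩
  · rw [mem_unitaryGroup_iff']
    ext i j
    fin_cases i <;> fin_cases j <;> simp [mul_apply, Fin.sum_univ_two] <;> field_simp
    exacts [by linear_combination -hrr, by ring, by ring, by linear_combination -hrr]
  · ext i; fin_cases i <;> simp

end Matrix

theorem Projectivization.eq_mk_fin_two {K : Type*} [Field K]
    (p : Projectivization K (Fin 2 → K)) :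
    (∃ w : K, p = mk K ![w, 1] (by simp)) ∨ p = mk K ![1, 0] (by simp) := by
  induction p using Projectivization.ind with
  | h v hv =>
  by_cases h1 : v 1 = 0
  · right
    exact (mk_eq_mk_iff' K _ _ hv _).mpr ⟨v 0, by ext i; fin_cases i <;> simp [h1]⟩
  · left
    refine ⟨v 0 / v 1, (mk_eq_mk_iff' K _ _ hv _).mpr ⟨v 1, ?_⟩⟩
    ext i; fin_cases i <;> simp [mul_div_cancel₀ _ h1]

def upperEmb : (Fin 2 → ℂ) →ₗ[ℂ] (Fin 4 → ℂ) where
  toFun v := ![v 0, v 1, 0, 0]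
  map_add' v w := by ext i; fin_cases i <;> simp
  map_smul' c v := by ext i; fin_cases i <;> simp

def lowerEmb : (Fin 2 → ℂ) →ₗ[ℂ] (Fin 4 → ℂ) where
  toFun v := ![0, 0, v 1, -v 0]
  map_add' v w := by ext i; fin_cases i <;> simp [add_comm]
  map_smul' c v := by ext i; fin_cases i <;> simp

theorem upperEmb_injective : Function.Injective upperEmb := fun v w h => by
  ext i; fin_cases i
  exacts [congr_fun h 0, congr_fun h 1]

def lineFlag (p : Projectivization ℂ (Fin 2 → ℂ)) :
    Submodule ℂ (Fin 4 → ℂ) × Submodule ℂ (Fin 4 → ℂ) :=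
  (p.submodule.map upperEmb, p.submodule.map upperEmb ⊔ p.submodule.map lowerEmb)

theorem lineFlag_mk (v : Fin 2 → ℂ) (hv : v ≠ 0) :
    lineFlag (.mk ℂ v hv) =
      (Submodule.span ℂ {upperEmb v}, Submodule.span ℂ {upperEmb v, lowerEmb v}) := by
  simp only [lineFlag, Projectivization.submodule_mk, Submodule.map_span, Set.image_singleton,
    Submodule.span_insert]

theorem lineFlag_injective : Function.Injective lineFlag := fun _ _ h =>
  Projectivization.submodule_injective <|
    Submodule.map_injective_of_injective upperEmb_injective (congrArg Prod.fst h)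

theorem lineFlag_mk_finite (w : ℂ) : lineFlag (.mk ℂ ![w, 1] (by simp)) = Fw w := by
  rw [lineFlag_mk]
  rfl

theorem lineFlag_mk_infty : lineFlag (.mk ℂ ![1, 0] (by simp)) = Finfty := by
  have hlow : lowerEmb ![1, 0] = -![0, 0, 0, 1] := by ext i; fin_cases i <;> simp [lowerEmb]
  rw [lineFlag_mk, hlow, Finfty, Submodule.span_insert, Submodule.span_insert,
    ← Set.neg_singleton, Submodule.span_neg]
  rfl

theorem range_lineFlag : Set.range lineFlag = {Fl | ∃ w : ℂ, Fl = Fw w} ∪ {Finfty} := by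
  ext Fl
  constructor
  · rintro ⟨p, rfl⟩
    rcases p.eq_mk_fin_two with ⟨w, rfl⟩ | rfl
    exacts [Or.inl ⟨w, lineFlag_mk_finite w⟩, Or.inr lineFlag_mk_infty]
  · rintro (⟨w, rfl⟩ | rfl)
    exacts [⟨_, lineFlag_mk_finite w⟩, ⟨_, lineFlag_mk_infty⟩]

abbrev diagConj (X : Matrix (Fin 2) (Fin 2) ℂ) : Matrix (Fin 4) (Fin 4) ℂ :=
  reindex finSumFinEquiv finSumFinEquiv (fromBlocks X 0 0 (X.map (starRingEnd ℂ)))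

theorem diagConj_mulVec_u₂ (X : Matrix (Fin 2) (Fin 2) ℂ) :
    diagConj X *ᵥ ![0, 1, 0, 0] = upperEmb (fun i => X i 1) := by
  ext i
  fin_cases i <;>
    simp [mulVec, dotProduct, Fin.sum_univ_four, finSumFinEquiv, Fin.addCases, upperEmb]

theorem diagConj_mulVec_u₃ (X : Matrix (Fin 2) (Fin 2) ℂ) :
    diagConj X *ᵥ ![0, 0, 1, 0] = ![0, 0, star (X 0 0), star (X 1 0)] := by
  ext i
  fin_cases i <;> simp [mulVec, dotProduct, Fin.sum_univ_four, finSumFinEquiv, Fin.addCases]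

theorem det_smul_diagConj_mulVec_u₃ {X : Matrix (Fin 2) (Fin 2) ℂ}
    (hX : X ∈ unitaryGroup (Fin 2) ℂ) :
    X.det • (diagConj X *ᵥ ![0, 0, 1, 0]) = lowerEmb (fun i => X i 1) := by
  have h := adjugate_eq_det_smul_star hX
  have h00 := congr_fun₂ h 0 0
  have h01 := congr_fun₂ h 0 1
  simp only [adjugate_fin_two, of_apply, cons_val', cons_val_zero, cons_val_one,
    Matrix.smul_apply, star_apply, smul_eq_mul] at h00 h01
  rw [diagConj_mulVec_u₃]
  ext i; fin_cases i <;> simp [lowerEmb, h00, h01]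

theorem mapFlag_diagConj_F0 {X : Matrix (Fin 2) (Fin 2) ℂ} (hX : X ∈ unitaryGroup (Fin 2) ℂ) :
    mapFlag (diagConj X) F0 =
      lineFlag (.mk ℂ (fun i => X i 1) (col_ne_zero_of_mem_unitaryGroup hX 1)) := by
  have hdet : IsUnit X.det := Unitary.isUnit_coe (U := ⟨_, det_of_mem_unitary hX⟩)
  rw [lineFlag_mk, ← det_smul_diagConj_mulVec_u₃ hX, ← diagConj_mulVec_u₂]
  simp only [mapFlag, F0, Submodule.span_insert, Submodule.map_sup, Submodule.map_span,
    Set.image_singleton, mulVecLin_apply, Submodule.span_singleton_smul_eq hdet]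

theorem orbit_F0_eq_range_lineFlag :
    {Fl | ∃ g ∈ K9, mapFlag g F0 = Fl} = Set.range lineFlag := by
  ext Fl
  constructor
  · rintro ⟨_, ⟨X, hX, rfl⟩, rfl⟩
    exact ⟨_, (mapFlag_diagConj_F0 hX).symm⟩
  · rintro ⟨p, rfl⟩
    induction p using Projectivization.ind with
    | h v hv =>
    obtain ⟨X, hX, c, hc⟩ := exists_mem_unitaryGroup_col_eq_smul v hv
    refine ⟨diagConj X, ⟨X, hX, rfl⟩, ?_⟩
    rw [mapFlag_diagConj_F0 hX, (Projectivization.mk_eq_mk_iff' ℂ _ _ _ hv).mpr ⟨c, hc.symm⟩]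

/-- The `K`-orbit of `F₀` equals `{F_w : w ∈ ℂ} ∪ {F_∞}`, and the map
`ℙ¹ → flags`, `[w : 1] ↦ F_w`, `[1 : 0] ↦ F_∞`, is an injection with image exactly this orbit
(giving the isomorphism of the orbit with `ℙ¹(ℂ)` as a compact complex subvariety). -/
theorem K_orbit_F0_eq_P1 :
    ({Fl | ∃ g ∈ K9, mapFlag g F0 = Fl} =
      {Fl | ∃ w : ℂ, Fl = Fw w} ∪ {Finfty}) ∧
    ∃ φ : Projectivization ℂ (Fin 2 → ℂ) →
        Submodule ℂ (Fin 4 → ℂ) × Submodule ℂ (Fin 4 → ℂ),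
      Function.Injective φ ∧
      Set.range φ = {Fl | ∃ g ∈ K9, mapFlag g F0 = Fl} ∧
      (∀ w : ℂ, φ (Projectivization.mk ℂ ![w, 1]
        (by intro h; simpa using congrFun h 1)) = Fw w) ∧
      φ (Projectivization.mk ℂ ![1, 0]
        (by intro h; simpa using congrFun h 0)) = Finfty := by
  rw [orbit_F0_eq_range_lineFlag]
  exact ⟨range_lineFlag, lineFlag, lineFlag_injective, rfl, lineFlag_mk_finite, lineFlag_mk_infty⟩

end
end
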